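/- arXiv:1906.06398 — 4 statements merged into one kernel-verified Lean document; each statement's English description precedes it below -/
import Mathlib

section
/- Let S be a Noetherian ring, g_1, …, g_c a regular sequence in S, R = S/(g_1,…,g_c), and let the Koszul complex E = ⋀• S^c on g_1,…,g_c be the S-free resolution of R. Let (K, δ) be an S-free resolution of an R-module M and, for each j, let τ_j: K → K[1] be a homotopy for multiplication by g_j on K. Define σ_{s,j}: ⋀^s S^c ⊗ K_j → K_{s+j} by sending e_{i_1}∧⋯∧e_{i_s} ⊗ a (with i_1 < ⋯ < i_s) to τ_{i_1}∘⋯∘τ_{i_s}(a). Then σ is a map of complexes E ⊗ K → K extending the multiplication map R ⊗ M → M; i.e., δσ_{s,j}(ω ⊗ a) = σ_{s−1,j}(∂ω ⊗ a) + (−1)^s σ_{s,j−1}(ω ⊗ δa), where ∂ is the Koszul differential of E. -/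
/-- composition, along ascending homological degrees, of a list of degree `+1` maps -/
def compUp {S : Type*} [CommRing S] {K : ℕ → Type*}
    [∀ i, AddCommGroup (K i)] [∀ i, Module S (K i)] {c : ℕ}
    (τ : Fin c → ∀ i : ℕ, K i →ₗ[S] K (i + 1)) :
    (l : List (Fin c)) → ∀ i : ℕ, K i →ₗ[S] K (i + l.length)
  | [], _ => LinearMap.id
  | a :: l, i => (τ a (i + l.length)) ∘ₗ (compUp τ l i)

/-- transport along an equality of indices -/
def castK {S : Type*} [CommRing S] {K : ℕ → Type*}
    [∀ i, AddCommGroup (K i)] [∀ i, Module S (K i)] {a b : ℕ} (h : a = b) :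
    K a →ₗ[S] K b := by subst h; exact LinearMap.id

/-!
Write `σ_l = τ_{l₁} ∘ ⋯ ∘ τ_{lₛ}`, so that `σ_{a :: l} = τ_a ∘ σ_l`. The homotopy identity
`d τ_a = g_a − τ_a d` moves `d` past `τ_a`: it produces `g_a σ_l`, the first summand of
`σ(∂ e_{a :: l})`, and `−τ_a (d σ_l)`, to which induction applies; `τ_a` carries the summands
of `σ(∂ e_l)` to the remaining ones, with the sign shifted by one. The base degree enters only
through the value of `d τ_a` there, so both statements are one induction.
-/

section

variable {S : Type*} [CommRing S] {K : ℕ → Type*} [∀ i, AddCommGroup (K i)]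
  [∀ i, Module S (K i)] {c : ℕ}

theorem comp_castK_succ (τ : ∀ i : ℕ, K i →ₗ[S] K (i + 1)) {p q : ℕ} (h : p = q) :
    τ q ∘ₗ (castK h : K p →ₗ[S] K q) = castK (congrArg (· + 1) h) ∘ₗ τ p := by
  subst h; rfl

/-- `σ(∂ e_{a :: l} ⊗ -)` in base degree `n`. -/
def sigmaKoszulDiff (g : Fin c → S) (τ : Fin c → ∀ i : ℕ, K i →ₗ[S] K (i + 1)) (n : ℕ)
    (a : Fin c) (l : List (Fin c)) : K n →ₗ[S] K (n + l.length) :=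
  ∑ t : Fin (a :: l).length, ((-1 : ℤ) ^ (t : ℕ)) •
    (g ((a :: l).get t) •
      ((castK (by rw [List.length_eraseIdx_of_lt t.isLt, List.length_cons]; omega) :
          K (n + ((a :: l).eraseIdx (t : ℕ)).length) →ₗ[S] K (n + l.length)) ∘ₗ
        compUp τ ((a :: l).eraseIdx (t : ℕ)) n))

theorem sigmaKoszulDiff_nil (g : Fin c → S) (τ : Fin c → ∀ i : ℕ, K i →ₗ[S] K (i + 1)) (n : ℕ)
    (a : Fin c) : sigmaKoszulDiff g τ n a [] = g a • LinearMap.id :=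
  (Fin.sum_univ_one _).trans (one_smul ℤ _)

theorem sigmaKoszulDiff_cons (g : Fin c → S) (τ : Fin c → ∀ i : ℕ, K i →ₗ[S] K (i + 1)) (n : ℕ)
    (a b : Fin c) (m : List (Fin c)) :
    sigmaKoszulDiff g τ n a (b :: m)
      = g a • compUp τ (b :: m) n - τ a (n + m.length) ∘ₗ sigmaKoszulDiff g τ n b m := by
  unfold sigmaKoszulDiff
  refine (Fin.sum_univ_succ (n := m.length + 1) _).trans ?_
  rw [← LinearMap.llcomp_apply' (τ a (n + m.length)), map_sum, sub_eq_add_neg,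
    ← Finset.sum_neg_distrib]
  congr 1
  · exact (one_smul ℤ _).trans (congrArg (g a • ·) (LinearMap.id_comp (compUp τ (b :: m) n)))
  refine Finset.sum_congr rfl fun t _ => ?_
  simp only [LinearMap.llcomp_apply', LinearMap.comp_smul, ← LinearMap.comp_assoc,
    comp_castK_succ (τ a), Fin.val_succ, pow_succ, mul_neg_one, neg_smul]
  rfl

/-- `ρ a l` plays the part of `σ_{a :: l} ∘ d` from the degree below `n`; it is `0` for `n = 0`. -/
theorem d_comp_compUp_cons (g : Fin c → S) (d : ∀ i : ℕ, K (i + 1) →ₗ[S] K i)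
    (τ : Fin c → ∀ i : ℕ, K i →ₗ[S] K (i + 1))
    (hτ : ∀ j i, d (i + 1) ∘ₗ τ j (i + 1) + τ j i ∘ₗ d i = g j • LinearMap.id)
    (n : ℕ) (ρ : Fin c → (l : List (Fin c)) → K n →ₗ[S] K (n + l.length))
    (hρ_nil : ∀ a, d n ∘ₗ τ a n + ρ a [] = g a • LinearMap.id)
    (hρ_cons : ∀ a b m, ρ a (b :: m) = τ a (n + m.length) ∘ₗ ρ b m) (a : Fin c)
    (l : List (Fin c)) :
    d (n + l.length) ∘ₗ compUp τ (a :: l) n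
      = sigmaKoszulDiff g τ n a l + ((-1 : ℤ) ^ (a :: l).length) • ρ a l := by
  induction l generalizing a with
  | nil =>
    rw [sigmaKoszulDiff_nil, ← hρ_nil a]
    simp only [compUp, LinearMap.comp_id, List.length_cons, List.length_nil, Nat.add_zero,
      zero_add, pow_one, neg_one_smul, add_neg_cancel_right]
  | cons b m ih =>
    have hdτ : d (n + (b :: m).length) ∘ₗ τ a (n + (b :: m).length)
        = g a • LinearMap.id - τ a (n + m.length) ∘ₗ d (n + m.length) :=
      eq_sub_of_add_eq (hτ a (n + m.length))
    rw [compUp, ← LinearMap.comp_assoc, hdτ, LinearMap.sub_comp, LinearMap.smul_comp,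
      LinearMap.id_comp, LinearMap.comp_assoc, ih, sigmaKoszulDiff_cons, hρ_cons,
      LinearMap.comp_add, LinearMap.comp_smul]
    simp only [List.length_cons, pow_succ]
    module

end

theorem sigma_maps_form_chain_map
    (S : Type*) [CommRing S]
    (c : ℕ) (g : Fin c → S)
    (K : ℕ → Type*) [∀ i, AddCommGroup (K i)] [∀ i, Module S (K i)]
    (d : ∀ i : ℕ, K (i + 1) →ₗ[S] K i)
    -- the homotopies `τ j` for multiplication by `g j` on `K`
    (τ : Fin c → ∀ i : ℕ, K i →ₗ[S] K (i + 1))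
    (hτ : ∀ j i, (d (i + 1)) ∘ₗ (τ j (i + 1)) + (τ j i) ∘ₗ (d i)
            = g j • LinearMap.id)
    (hτ0 : ∀ j, (d 0) ∘ₗ (τ j 0) = g j • LinearMap.id) :
    -- the chain-map identity for `σ`, on a basis element indexed by the strictly
    -- increasing list `a :: l` (evaluated on `K (i+1)`; the analogous identity on
    -- `K 0` omits the last term)
    (∀ (a : Fin c) (l : List (Fin c)), (a :: l).Chain' (· < ·) → ∀ i : ℕ,
      (d ((i + 1) + l.length)) ∘ₗ (compUp τ (a :: l) (i + 1))
        = (∑ t : Fin (a :: l).length,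
            ((-1 : ℤ) ^ (t : ℕ)) •
              (g ((a :: l).get t) •
                ((castK (by rw [List.length_eraseIdx_of_lt t.isLt, List.length_cons]; omega) :
                    K ((i + 1) + ((a :: l).eraseIdx (t : ℕ)).length)
                      →ₗ[S] K ((i + 1) + l.length)) ∘ₗ
                  (compUp τ ((a :: l).eraseIdx (t : ℕ)) (i + 1)))))
          + ((-1 : ℤ) ^ (a :: l).length) •
              ((castK (by simp [List.length_cons]; omega) : K (i + (a :: l).length) →ₗ[S] K ((i + 1) + l.length)) ∘ₗ
                ((compUp τ (a :: l) i) ∘ₗ (d i)))) ∧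
    (∀ (a : Fin c) (l : List (Fin c)), (a :: l).Chain' (· < ·) →
      (d (0 + l.length)) ∘ₗ (compUp τ (a :: l) 0)
        = ∑ t : Fin (a :: l).length,
            ((-1 : ℤ) ^ (t : ℕ)) •
              (g ((a :: l).get t) •
                ((castK (by rw [List.length_eraseIdx_of_lt t.isLt, List.length_cons]; omega) :
                    K (0 + ((a :: l).eraseIdx (t : ℕ)).length)
                      →ₗ[S] K (0 + l.length)) ∘ₗ
                  (compUp τ ((a :: l).eraseIdx (t : ℕ)) 0)))) := by
  refine ⟨fun a l _ i => ?_, fun a l _ => ?_⟩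
  · refine d_comp_compUp_cons g d τ hτ (i + 1)
      (fun a l => castK (by simp only [List.length_cons]; omega) ∘ₗ compUp τ (a :: l) i ∘ₗ d i)
      (fun a => hτ a i) (fun a b m => ?_) a l
    simp only [compUp, ← LinearMap.comp_assoc, comp_castK_succ (τ a)]
  · have h := d_comp_compUp_cons g d τ hτ 0 (fun _ _ => 0)
      (fun a => (add_zero _).trans (hτ0 a)) (fun _ _ _ => (LinearMap.comp_zero _).symm) a l
    rwa [smul_zero, add_zero] at h
end

section
/- Let K be the Koszul complex over S on a regular sequence f_1, …, f_n, and let g_1, …, g_c be a regular sequence with g_j = Σ_i a_{ij} f_i for a c×n matrix A = (a_{ij}). Then the composition τ_1∘⋯∘τ_c of the homotopies τ_j = (Σ_i a_{ij} e_i) ∧ − for the g_j on K equals exterior multiplication by the element α = ⋀^c A(e̅_1∧⋯∧e̅_c) ∈ ⋀^c S^n, where e̅_1,…,e̅_c is the standard basis of S^c; i.e., the degree-c map σ: K → K[−c] may be taken to be α ∧ −. -/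
open ExteriorAlgebra

theorem ExteriorAlgebra.map_prod_ofFn_ι {R M N : Type*} [CommRing R] [AddCommGroup M] [Module R M]
    [AddCommGroup N] [Module R N] (φ : M →ₗ[R] N) {k : ℕ} (v : Fin k → M) :
    ExteriorAlgebra.map φ (List.ofFn fun j => ι R (v j)).prod =
      (List.ofFn fun j => ι R (φ (v j))).prod := by
  simp only [map_list_prod, List.map_ofFn, Function.comp_def, ExteriorAlgebra.map_apply_ι]

theorem LinearMap.apply_single_one_eq_col {R ι κ : Type*} [CommSemiring R] [Fintype κ]
    [DecidableEq κ] (A : Matrix ι κ R) (φ : (κ → R) →ₗ[R] (ι → R))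
    (hφ : ∀ (v : κ → R) (i : ι), φ v i = ∑ j, A i j * v j) (j : κ) :
    φ (Pi.single j 1) = fun i => A i j := by
  funext i
  simp [hφ, Pi.single_apply]

theorem composition_of_homotopies_is_wedge_by_alpha_general
    (S : Type*) [CommRing S] (n c : ℕ)
    (A : Matrix (Fin n) (Fin c) S)
    -- the linear map `S^c → S^n` given by the matrix `A`
    (Alin : (Fin c → S) →ₗ[S] (Fin n → S))
    (hAlin : ∀ (v : Fin c → S) (i : Fin n), Alin v i = ∑ j, A i j * v j)
    -- `α` is the image of `e̅ 1 ∧ ⋯ ∧ e̅ c` under `⋀ A`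
    (α : ExteriorAlgebra S (Fin n → S))
    (hα : α = ExteriorAlgebra.map Alin
      ((List.ofFn fun j : Fin c => ι S (Pi.single j (1 : S))).prod))
    (x : ExteriorAlgebra S (Fin n → S)) :
    -- composing the homotopies (wedge by the columns of `A`, in order) is wedge by `α`
    ((List.ofFn fun j : Fin c => ι S (fun i => A i j)).prod) * x = α * x := by
  simp only [hα, ExteriorAlgebra.map_prod_ofFn_ι, LinearMap.apply_single_one_eq_col A Alin hAlin]

theorem composition_of_homotopies_is_wedge_by_alpha
    (S : Type*) [CommRing S] (n c : ℕ) (f : Fin n → S) (g : Fin c → S)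
    (hf : RingTheory.Sequence.IsRegular S (List.ofFn f))
    (hg : RingTheory.Sequence.IsRegular S (List.ofFn g))
    (A : Matrix (Fin n) (Fin c) S)
    (hA : ∀ j, g j = ∑ i, A i j * f i)
    -- the linear map `S^c → S^n` given by the matrix `A`
    (Alin : (Fin c → S) →ₗ[S] (Fin n → S))
    (hAlin : ∀ (v : Fin c → S) (i : Fin n), Alin v i = ∑ j, A i j * v j)
    -- `α` is the image of `e̅ 1 ∧ ⋯ ∧ e̅ c` under `⋀ A`
    (α : ExteriorAlgebra S (Fin n → S))
    (hα : α = ExteriorAlgebra.map Alin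
      ((List.ofFn fun j : Fin c => ι S (Pi.single j (1 : S))).prod))
    (x : ExteriorAlgebra S (Fin n → S)) :
    -- composing the homotopies (wedge by the columns of `A`, in order) is wedge by `α`
    ((List.ofFn fun j : Fin c => ι S (fun i => A i j)).prod) * x = α * x :=
  composition_of_homotopies_is_wedge_by_alpha_general S n c A Alin hAlin α hα x
end

section
/- Let S be a Noetherian ring, R = S/I where R admits a finite S-free resolution E of length c with ∂_c ≅ ∂_1^*. Let M be an R-module with S-free resolution (K, δ), and let σ: E ⊗ K → K be a map of complexes inducing the multiplication R ⊗ M → M, with components σ_{i,j}: E_i ⊗ K_j → K_{i+j}. Then (identifying E_c ≅ S) the maps R ⊗ σ_{c,j}: R ⊗ K_j → R ⊗ K_{c+j} form a morphism of complexes R ⊗ K → (R ⊗ K)[−c], and this morphism induces an isomorphism M = H_0(R ⊗ K) → H_c(R ⊗ K) = Tor^S_c(R, M). -/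
/-- reduction of a linear map modulo `I` -/
def quotMap {S : Type*} [CommRing S] (I : Ideal S) {A B : Type*}
    [AddCommGroup A] [Module S A] [AddCommGroup B] [Module S B] (φ : A →ₗ[S] B) :
    (A ⧸ (I • (⊤ : Submodule S A))) →ₗ[S] (B ⧸ (I • (⊤ : Submodule S B))) :=
  Submodule.mapQ _ _ φ (by
    refine Submodule.smul_le.mpr fun r hr m _ => ?_
    simp only [Submodule.mem_comap, map_smul]
    exact Submodule.smul_mem_smul hr Submodule.mem_top)

open TensorProduct LinearMap

section Generalities

variable {S : Type*} [CommRing S] {I : Ideal S} {A B M : Type*}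
  [AddCommGroup A] [Module S A] [AddCommGroup B] [Module S B] [AddCommGroup M] [Module S M]

lemma quotMap_mk (φ : A →ₗ[S] B) (x : A) :
    quotMap I φ (Submodule.Quotient.mk x) = Submodule.Quotient.mk (φ x) :=
  rfl

lemma mk_mem_range_quotMap_iff (φ : A →ₗ[S] B) (w : B) :
    (Submodule.Quotient.mk w : B ⧸ I • (⊤ : Submodule S B)) ∈ range (quotMap I φ) ↔
      w ∈ I • ⊤ ⊔ range φ := by
  rw [quotMap, Submodule.range_mapQ, ← Submodule.comap_map_mkQ]
  exact Iff.rfl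

lemma mem_range_of_comp_eq_neg_one_pow_smul {C D : Type*} [AddCommGroup C] [Module S C]
    [AddCommGroup D] [Module S D] {f : A →ₗ[S] B} {g : B →ₗ[S] D} {h : A →ₗ[S] C}
    {k : C →ₗ[S] D} {n : ℕ} (H : k ∘ₗ h = ((-1 : ℤ) ^ n) • (g ∘ₗ f)) (x : A) :
    g (f x) ∈ range k := by
  refine ⟨((-1 : ℤ) ^ n) • h x, ?_⟩
  rw [map_zsmul, ← comp_apply, H, LinearMap.smul_apply, smul_smul, ← pow_add,
    Even.neg_one_pow ⟨n, rfl⟩, one_smul, comp_apply]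

lemma smul_eq_smul_of_sub_mem (hM : ∀ x ∈ I, ∀ m : M, x • m = 0) {x y : S} (h : x - y ∈ I)
    (m : M) : x • m = y • m :=
  sub_eq_zero.mp (by rw [← sub_smul]; exact hM _ h m)

lemma eq_zero_of_mem_smul_top (hM : ∀ x ∈ I, ∀ m : M, x • m = 0) {m : M}
    (hm : m ∈ I • (⊤ : Submodule S M)) : m = 0 := by
  refine Submodule.smul_induction_on hm (fun r hr n _ => hM r hr n) fun a b ha hb => ?_
  rw [ha, hb, add_zero]

lemma tmul_eq_zero_of_mem_smul_top (hM : ∀ x ∈ I, ∀ m : M, x • m = 0) {p : A}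
    (hp : p ∈ I • (⊤ : Submodule S A)) (m : M) : p ⊗ₜ[S] m = 0 := by
  refine Submodule.smul_induction_on hp (fun r hr n _ => ?_) fun a b ha hb => ?_
  · rw [smul_tmul, hM r hr m, tmul_zero]
  · rw [add_tmul, ha, hb, add_zero]

lemma rTensor_eq_zero_of_range_le_smul_top (hM : ∀ x ∈ I, ∀ m : M, x • m = 0) (f : A →ₗ[S] B)
    (hf : range f ≤ I • ⊤) : f.rTensor M = 0 :=
  TensorProduct.ext' fun a m => by
    rw [rTensor_tmul, tmul_eq_zero_of_mem_smul_top hM (hf (mem_range_self f a)),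
      LinearMap.zero_apply]

lemma rTensor_lTensor_comm_apply {A' B' : Type*} [AddCommGroup A'] [Module S A']
    [AddCommGroup B'] [Module S B'] (f : A →ₗ[S] A') (g : B →ₗ[S] B') (w : A ⊗[S] B) :
    f.rTensor B' (g.lTensor A w) = g.lTensor A' (f.rTensor B w) := by
  rw [← comp_apply, rTensor_comp_lTensor, ← lTensor_comp_rTensor, comp_apply]

lemma Function.Exact.rTensor_apply_rTensor_apply {C : Type*} [AddCommGroup C] [Module S C]
    {f : A →ₗ[S] B} {g : B →ₗ[S] C} (h : Function.Exact f g) (w : A ⊗[S] M) :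
    g.rTensor M (f.rTensor M w) = 0 := by
  rw [← rTensor_comp_apply, h.linearMap_comp_eq_zero, rTensor_zero, LinearMap.zero_apply]

lemma Function.Exact.lTensor_apply_lTensor_apply {C : Type*} [AddCommGroup C] [Module S C]
    {f : A →ₗ[S] B} {g : B →ₗ[S] C} (h : Function.Exact f g) (w : M ⊗[S] A) :
    g.lTensor M (f.lTensor M w) = 0 := by
  rw [← lTensor_comp_apply, h.linearMap_comp_eq_zero, lTensor_zero, LinearMap.zero_apply]

lemma quotient_smul_eq_zero_of_mem (x : S) (hx : x ∈ I) (m : S ⧸ I) : x • m = 0 := by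
  induction m using Submodule.Quotient.induction_on with
  | H s =>
    rw [← Submodule.Quotient.mk_smul, Submodule.Quotient.mk_eq_zero, smul_eq_mul]
    exact I.mul_mem_right s hx

end Generalities

section Trivialization

variable {S : Type*} [CommRing S] {P A B : Type*} [AddCommGroup P] [Module S P]
  [AddCommGroup A] [Module S A] [AddCommGroup B] [Module S B]

noncomputable def lidOf (e : P ≃ₗ[S] S) (A : Type*) [AddCommGroup A] [Module S A] :
    P ⊗[S] A ≃ₗ[S] A :=
  (e.rTensor A).trans (TensorProduct.lid S A)

@[simp] lemma lidOf_tmul (e : P ≃ₗ[S] S) (p : P) (a : A) : lidOf e A (p ⊗ₜ a) = e p • a := by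
  simp [lidOf]

lemma lidOf_lTensor (e : P ≃ₗ[S] S) (φ : A →ₗ[S] B) (w : P ⊗[S] A) :
    lidOf e B (φ.lTensor P w) = φ (lidOf e A w) := by
  induction w using TensorProduct.induction_on with
  | zero => simp
  | tmul p a => simp
  | add w w' hw hw' => simp [hw, hw']

lemma range_lidOf_comp_rTensor {I : Ideal S} {F : Type*} [AddCommGroup F] [Module S F]
    (e : P ≃ₗ[S] S) (d : F →ₗ[S] P) (hd : range (e.toLinearMap ∘ₗ d) = I) :
    range ((lidOf e A).toLinearMap ∘ₗ d.rTensor A) = I • ⊤ := by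
  apply le_antisymm
  · rintro _ ⟨g, rfl⟩
    induction g using TensorProduct.induction_on with
    | zero => simp
    | tmul v a =>
        simpa using Submodule.smul_mem_smul (hd ▸ mem_range_self _ v) Submodule.mem_top
    | add g g' hg hg' => rw [map_add]; exact Submodule.add_mem _ hg hg'
  · rw [Submodule.smul_le]
    rintro _ hr a -
    rw [← hd] at hr
    obtain ⟨v, rfl⟩ := hr
    exact ⟨v ⊗ₜ a, by simp⟩

lemma exists_lidOf_rTensor_eq {I : Ideal S} {F : Type*} [AddCommGroup F] [Module S F]
    {e : P ≃ₗ[S] S} {d : F →ₗ[S] P} (hd : range (e.toLinearMap ∘ₗ d) = I) {w : A}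
    (hw : w ∈ I • (⊤ : Submodule S A)) : ∃ g : F ⊗[S] A, lidOf e A (d.rTensor A g) = w := by
  rw [← range_lidOf_comp_rTensor e d hd] at hw
  exact hw

lemma lidOf_rTensor_mem_smul_top {I : Ideal S} {F : Type*} [AddCommGroup F] [Module S F]
    {e : P ≃ₗ[S] S} {d : F →ₗ[S] P} (hd : range (e.toLinearMap ∘ₗ d) = I) (g : F ⊗[S] A) :
    lidOf e A (d.rTensor A g) ∈ I • (⊤ : Submodule S A) := by
  rw [← range_lidOf_comp_rTensor e d hd]
  exact mem_range_self _ g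

end Trivialization

section Duality

variable {S : Type*} [CommRing S] {I : Ideal S}

lemma mem_smul_top_of_forall_apply_mem {F : Type*} [AddCommGroup F] [Module S F]
    [Module.Free S F] [Module.Finite S F] {f : Module.Dual S F} (hf : ∀ v, f v ∈ I) :
    f ∈ I • (⊤ : Submodule S (Module.Dual S F)) := by
  rw [← (Module.Free.chooseBasis S F).sum_dual_apply_smul_coord f]
  exact Submodule.sum_mem _ fun i _ => Submodule.smul_mem_smul (hf _) Submodule.mem_top

lemma dualMap_apply_mem {P F : Type*} [AddCommGroup P] [Module S P] [AddCommGroup F]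
    [Module S F] (e : P ≃ₗ[S] S) (d : F →ₗ[S] P) (hd : range (e.toLinearMap ∘ₗ d) ≤ I)
    (φ : Module.Dual S P) (v : F) : d.dualMap φ v ∈ I := by
  have hdv : d v = e (d v) • e.symm 1 := by
    rw [← map_smul, smul_eq_mul, mul_one, LinearEquiv.symm_apply_apply]
  rw [dualMap_apply, hdv, map_smul, smul_eq_mul]
  exact I.mul_mem_right _ (hd ⟨v, rfl⟩)

lemma mem_smul_top_of_eq_dualMap {P F X Y : Type*} [AddCommGroup P] [Module S P]
    [AddCommGroup F] [Module S F] [Module.Free S F] [Module.Finite S F]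
    [AddCommGroup X] [Module S X] [AddCommGroup Y] [Module S Y]
    (e : P ≃ₗ[S] S) (d : F →ₗ[S] P) (hd : range (e.toLinearMap ∘ₗ d) ≤ I)
    (a : X ≃ₗ[S] Module.Dual S P) (b : Y ≃ₗ[S] Module.Dual S F) (f : X →ₗ[S] Y)
    (hdual : ∀ z, b (f z) = d.dualMap (a z)) (z : X) : f z ∈ I • (⊤ : Submodule S Y) := by
  have hb : b (f z) ∈ I • (⊤ : Submodule S (Module.Dual S F)) :=
    hdual z ▸ mem_smul_top_of_forall_apply_mem (dualMap_apply_mem e d hd (a z))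
  simpa using Submodule.smul_top_le_comap_smul_top I b.symm.toLinearMap hb

end Duality

section DoubleComplex

variable {S : Type*} [CommRing S] {I : Ideal S} {c : ℕ}
  {E : ℕ → Type*} [∀ i, AddCommGroup (E i)] [∀ i, Module S (E i)]
  {K : ℕ → Type*} [∀ i, AddCommGroup (K i)] [∀ i, Module S (K i)]
  {M : Type*} [AddCommGroup M] [Module S M]
  {dE : ∀ i, E (i + 1) →ₗ[S] E i} {e₀ : E 0 ≃ₗ[S] S} {u : E (c + 1) ≃ₗ[S] S}
  {dK : ∀ i, K (i + 1) →ₗ[S] K i} {εK : K 0 →ₗ[S] M}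

variable (u εK) in
noncomputable def cornerEval (i : ℕ) : E i ⊗[S] K 0 →ₗ[S] M :=
  if h : i = c + 1 then
    εK ∘ₗ (lidOf u (K 0)).toLinearMap ∘ₗ castK (K := fun n => E n ⊗[S] K 0) h
  else 0

lemma cornerEval_top (w : E (c + 1) ⊗[S] K 0) :
    cornerEval u εK (c + 1) w = εK (lidOf u (K 0) w) := by
  rw [cornerEval, dif_pos rfl]
  rfl

lemma cornerEval_of_ne {i : ℕ} (h : i ≠ c + 1) : cornerEval u εK i = (0 : E i ⊗[S] K 0 →ₗ[S] M) :=
  dif_neg h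

variable (dE u dK εK) in
/-- `Zigzag d i w m`: the staircase of the double complex `E ⊗ K` leads from `w ∈ E i ⊗ K d`,
alternately lifting along `dE ⊗ K` and applying `E ⊗ dK`, down to `E (i + d) ⊗ K 0`, where
`cornerEval` gives `m`. -/
def Zigzag : (d i : ℕ) → E i ⊗[S] K d → M → Prop
  | 0, i, w, m => cornerEval u εK i w = m
  | d + 1, i, w, m => ∃ w' : E (i + 1) ⊗[S] K d,
      (dK d).lTensor (E i) w = (dE i).rTensor (K d) w' ∧ Zigzag d (i + 1) w' m

lemma Zigzag.sub {d i : ℕ} {w w' : E i ⊗[S] K d} {m m' : M} (h : Zigzag dE u dK εK d i w m)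
    (h' : Zigzag dE u dK εK d i w' m') : Zigzag dE u dK εK d i (w - w') (m - m') := by
  induction d generalizing i with
  | zero => simp only [Zigzag] at h h' ⊢; rw [map_sub, h, h']
  | succ d ih =>
      obtain ⟨v, hv, hvm⟩ := h
      obtain ⟨v', hv', hvm'⟩ := h'
      exact ⟨v - v', by rw [map_sub, map_sub, hv, hv'], ih hvm hvm'⟩

lemma Zigzag.smul (r : S) {d i : ℕ} {w : E i ⊗[S] K d} {m : M}
    (h : Zigzag dE u dK εK d i w m) : Zigzag dE u dK εK d i (r • w) (r • m) := by
  induction d generalizing i with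
  | zero => simp only [Zigzag] at h ⊢; rw [map_smul, h]
  | succ d ih =>
      obtain ⟨v, hv, hvm⟩ := h
      exact ⟨r • v, by rw [map_smul, map_smul, hv], ih hvm⟩

lemma Zigzag.exists [∀ i, Module.Free S (K i)] (hE : ∀ i, Function.Exact (dE (i + 1)) (dE i))
    (hK : ∀ i, Function.Exact (dK (i + 1)) (dK i)) {d i : ℕ} {w : E i ⊗[S] K (d + 1)}
    (hw : (dK d).lTensor (E i) w ∈ range ((dE i).rTensor (K d))) :
    ∃ m, Zigzag dE u dK εK (d + 1) i w m := by
  induction d generalizing i with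
  | zero =>
      obtain ⟨w', hw'⟩ := hw
      exact ⟨_, w', hw'.symm, rfl⟩
  | succ d ih =>
      obtain ⟨w', hw'⟩ := hw
      have hdw' : (dE i).rTensor (K d) ((dK d).lTensor (E (i + 1)) w') = 0 := by
        rw [rTensor_lTensor_comm_apply, hw']
        exact (hK d).lTensor_apply_lTensor_apply w
      obtain ⟨w'', hw''⟩ := (Module.Flat.rTensor_exact (K d) (hE i) _).mp hdw'
      obtain ⟨m, hm⟩ := ih ⟨w'', hw''⟩
      exact ⟨m, w', hw'.symm, hm⟩

lemma Zigzag.eq_zero [∀ i, Module.Free S (K i)] (hlast : dE (c + 1) = 0)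
    (hE : ∀ i, Function.Exact (dE (i + 1)) (dE i))
    (hK : ∀ i, Function.Exact (dK (i + 1)) (dK i)) (hK0 : Function.Exact (dK 0) εK)
    {d i : ℕ} (hid : i + d = c + 1) {w : E i ⊗[S] K d} {m : M} (h : Zigzag dE u dK εK d i w m)
    (hw : w ∈ range ((dK d).lTensor (E i)) ⊔ range ((dE i).rTensor (K d))) : m = 0 := by
  induction d generalizing i with
  | zero =>
      obtain ⟨_, ⟨a, rfl⟩, _, ⟨b, rfl⟩, rfl⟩ := Submodule.mem_sup.mp hw
      obtain rfl : i = c + 1 := hid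
      simp only [Zigzag] at h
      rw [← h, hlast, rTensor_zero, LinearMap.zero_apply, add_zero, cornerEval_top,
        lidOf_lTensor]
      exact hK0.apply_apply_eq_zero _
  | succ d ih =>
      obtain ⟨_, ⟨a, rfl⟩, _, ⟨b, rfl⟩, rfl⟩ := Submodule.mem_sup.mp hw
      obtain ⟨w', hw', hw'm⟩ := h
      have hcycle : (dE i).rTensor (K d) (w' - (dK d).lTensor (E (i + 1)) b) = 0 := by
        rw [map_sub, ← hw', map_add, (hK d).lTensor_apply_lTensor_apply, zero_add,
          rTensor_lTensor_comm_apply, sub_self]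
      obtain ⟨b', hb'⟩ := (Module.Flat.rTensor_exact (K d) (hE i) _).mp hcycle
      have hw'_eq : w' = (dK d).lTensor (E (i + 1)) b + (dE (i + 1)).rTensor (K d) b' := by
        rw [hb', add_sub_cancel]
      exact ih (by omega) hw'm
        (hw'_eq ▸ Submodule.add_mem_sup (mem_range_self _ b) (mem_range_self _ b'))

lemma Zigzag.mem_sup_of_zero [∀ i, Module.Free S (E i)]
    (hE : ∀ i, Function.Exact (dE (i + 1)) (dE i))
    (hK : ∀ i, Function.Exact (dK (i + 1)) (dK i)) (hK0 : Function.Exact (dK 0) εK)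
    {d i : ℕ} (hid : i + d = c + 1) {w : E i ⊗[S] K d} (h : Zigzag dE u dK εK d i w 0) :
    w ∈ range ((dK d).lTensor (E i)) ⊔ range ((dE i).rTensor (K d)) := by
  induction d generalizing i with
  | zero =>
      obtain rfl : i = c + 1 := hid
      simp only [Zigzag] at h
      rw [cornerEval_top] at h
      obtain ⟨y, hy⟩ := (hK0 _).mp h
      refine Submodule.mem_sup_left ⟨(lidOf u (K 1)).symm y, (lidOf u (K 0)).injective ?_⟩
      rw [lidOf_lTensor, LinearEquiv.apply_symm_apply, hy]
  | succ d ih =>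
      obtain ⟨w', hw', hw'0⟩ := h
      obtain ⟨_, ⟨a, rfl⟩, _, ⟨b, rfl⟩, rfl⟩ := Submodule.mem_sup.mp (ih (by omega) hw'0)
      have hcycle : (dK d).lTensor (E i) (w - (dE i).rTensor (K (d + 1)) a) = 0 := by
        rw [map_sub, hw', map_add, (hE i).rTensor_apply_rTensor_apply, add_zero,
          rTensor_lTensor_comm_apply, sub_self]
      obtain ⟨a', ha'⟩ := (Module.Flat.lTensor_exact (E i) (hK d) _).mp hcycle
      have hw_eq : w = (dK (d + 1)).lTensor (E i) a' + (dE i).rTensor (K (d + 1)) a := by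
        rw [ha', sub_add_cancel]
      exact hw_eq ▸ Submodule.add_mem_sup (mem_range_self _ a') (mem_range_self _ a)

variable (dE e₀ u dK εK) in
/-- For `z` with `dK z ∈ I • K c`, i.e. a cycle of `R ⊗ K`, lift `dK z` along
`E 1 ⊗ K c → I • K c` and zigzag to `M`. This relation is the composite isomorphism
`H_{c+1}(R ⊗ K) ≅ H_{c+1}(E ⊗ K) ≅ H_{c+1}(E ⊗ M) = E (c+1) ⊗ M ≅ M`. -/
def TorZigzag (z : K (c + 1)) (m : M) : Prop :=
  ∃ s : E 1 ⊗[S] K c, lidOf e₀ (K c) ((dE 0).rTensor (K c) s) = dK c z ∧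
    Zigzag dE u dK εK c 1 s m

lemma TorZigzag.sub {z z' : K (c + 1)} {m m' : M} (h : TorZigzag dE e₀ u dK εK z m)
    (h' : TorZigzag dE e₀ u dK εK z' m') : TorZigzag dE e₀ u dK εK (z - z') (m - m') := by
  obtain ⟨s, hs, hsm⟩ := h
  obtain ⟨s', hs', hsm'⟩ := h'
  exact ⟨s - s', by rw [map_sub, map_sub, hs, hs', map_sub], hsm.sub hsm'⟩

lemma TorZigzag.smul (r : S) {z : K (c + 1)} {m : M} (h : TorZigzag dE e₀ u dK εK z m) :
    TorZigzag dE e₀ u dK εK (r • z) (r • m) := by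
  obtain ⟨s, hs, hsm⟩ := h
  exact ⟨r • s, by rw [map_smul, map_smul, hs, map_smul], hsm.smul r⟩

lemma TorZigzag.exists_of_cycle [∀ i, Module.Free S (K i)]
    (haug : range (e₀.toLinearMap ∘ₗ dE 0) = I) (hE : ∀ i, Function.Exact (dE (i + 1)) (dE i))
    (hK : ∀ i, Function.Exact (dK (i + 1)) (dK i)) {z : K (c + 1)}
    (hz : dK c z ∈ I • (⊤ : Submodule S (K c))) : ∃ m, TorZigzag dE e₀ u dK εK z m := by
  obtain ⟨g, hg⟩ := exists_lidOf_rTensor_eq haug hz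
  cases c with
  | zero => exact ⟨_, g, hg, rfl⟩
  | succ c =>
      have hcycle : (dE 0).rTensor (K c) ((dK c).lTensor (E 1) g) = 0 := by
        apply (lidOf e₀ (K c)).map_eq_zero_iff.mp
        rw [rTensor_lTensor_comm_apply, lidOf_lTensor, hg]
        exact (hK c).apply_apply_eq_zero z
      obtain ⟨m, hm⟩ := Zigzag.exists (u := u) (εK := εK) hE hK
        ((Module.Flat.rTensor_exact (K c) (hE 0) _).mp hcycle)
      exact ⟨m, g, hg, hm⟩

lemma TorZigzag.eq_zero [∀ i, Module.Free S (K i)] (haug : range (e₀.toLinearMap ∘ₗ dE 0) = I)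
    (hlast : dE (c + 1) = 0) (hE : ∀ i, Function.Exact (dE (i + 1)) (dE i))
    (hK : ∀ i, Function.Exact (dK (i + 1)) (dK i)) (hK0 : Function.Exact (dK 0) εK)
    {z : K (c + 1)} {m : M} (h : TorZigzag dE e₀ u dK εK z m)
    (hz : z ∈ I • ⊤ ⊔ range (dK (c + 1))) : m = 0 := by
  obtain ⟨p, hp, _, ⟨y, rfl⟩, rfl⟩ := Submodule.mem_sup.mp hz
  obtain ⟨s, hs, hsm⟩ := h
  obtain ⟨g, rfl⟩ := exists_lidOf_rTensor_eq haug hp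
  have hcycle : (dE 0).rTensor (K c) (s - (dK c).lTensor (E 1) g) = 0 := by
    apply (lidOf e₀ (K c)).map_eq_zero_iff.mp
    rw [map_sub, map_sub, hs, rTensor_lTensor_comm_apply, lidOf_lTensor, map_add,
      (hK c).apply_apply_eq_zero, add_zero, sub_self]
  obtain ⟨b, hb⟩ := (Module.Flat.rTensor_exact (K c) (hE 0) _).mp hcycle
  have hs_eq : s = (dK c).lTensor (E 1) g + (dE 1).rTensor (K c) b := by
    rw [hb, add_sub_cancel]
  exact hsm.eq_zero hlast hE hK hK0 (by omega)
    (hs_eq ▸ Submodule.add_mem_sup (mem_range_self _ g) (mem_range_self _ b))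

lemma TorZigzag.mem_sup_of_zero [∀ i, Module.Free S (E i)]
    (haug : range (e₀.toLinearMap ∘ₗ dE 0) = I) (hE : ∀ i, Function.Exact (dE (i + 1)) (dE i))
    (hK : ∀ i, Function.Exact (dK (i + 1)) (dK i)) (hK0 : Function.Exact (dK 0) εK)
    {z : K (c + 1)} (h : TorZigzag dE e₀ u dK εK z 0) : z ∈ I • ⊤ ⊔ range (dK (c + 1)) := by
  obtain ⟨s, hs, hs0⟩ := h
  obtain ⟨_, ⟨a, rfl⟩, _, ⟨b, rfl⟩, rfl⟩ :=
    Submodule.mem_sup.mp (hs0.mem_sup_of_zero hE hK hK0 (by omega))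
  set p := lidOf e₀ (K (c + 1)) ((dE 0).rTensor (K (c + 1)) a)
  have hcycle : dK c (z - p) = 0 := by
    rw [map_sub, ← hs, map_add, (hE 0).rTensor_apply_rTensor_apply, add_zero,
      rTensor_lTensor_comm_apply, lidOf_lTensor, sub_self]
  obtain ⟨y, hy⟩ := (hK c _).mp hcycle
  have hz_eq : z = p + dK (c + 1) y := by rw [hy, add_sub_cancel]
  exact hz_eq ▸ Submodule.add_mem_sup (lidOf_rTensor_mem_smul_top haug a) (mem_range_self _ y)

lemma TorZigzag.exists_of_zigzag (hkill : ∀ x ∈ I, ∀ m : M, x • m = 0)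
    (haug : range (e₀.toLinearMap ∘ₗ dE 0) = I) (hE : ∀ i, Function.Exact (dE (i + 1)) (dE i))
    (hK : ∀ i, Function.Exact (dK (i + 1)) (dK i)) (hK0 : Function.Exact (dK 0) εK)
    {s : E 1 ⊗[S] K c} {m : M} (h : Zigzag dE u dK εK c 1 s m) :
    ∃ z, TorZigzag dE e₀ u dK εK z m := by
  cases c with
  | zero =>
      have hcycle : εK (lidOf e₀ (K 0) ((dE 0).rTensor (K 0) s)) = 0 :=
        eq_zero_of_mem_smul_top hkill
          (Submodule.smul_top_le_comap_smul_top I εK (lidOf_rTensor_mem_smul_top haug s))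
      obtain ⟨z, hz⟩ := (hK0 _).mp hcycle
      exact ⟨z, s, hz.symm, h⟩
  | succ c =>
      obtain ⟨s', hs', hs'm⟩ := h
      have hcycle : dK c (lidOf e₀ (K (c + 1)) ((dE 0).rTensor (K (c + 1)) s)) = 0 := by
        rw [← lidOf_lTensor, ← rTensor_lTensor_comm_apply, hs',
          (hE 0).rTensor_apply_rTensor_apply, map_zero]
      obtain ⟨z, hz⟩ := (hK c _).mp hcycle
      exact ⟨z, s, hz.symm, s', hs', hs'm⟩

lemma Zigzag.exists_torZigzag [∀ i, Module.Free S (E i)]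
    (hsmall : range (dE c) ≤ I • ⊤) (hkill : ∀ x ∈ I, ∀ m : M, x • m = 0)
    (haug : range (e₀.toLinearMap ∘ₗ dE 0) = I) (hE : ∀ i, Function.Exact (dE (i + 1)) (dE i))
    (hK : ∀ i, Function.Exact (dK (i + 1)) (dK i)) (hK0 : Function.Exact (dK 0) εK) {i d : ℕ}
    (hid : i + 1 + d = c + 1) {w : E (i + 1) ⊗[S] K d} {m : M}
    (h : Zigzag dE u dK εK d (i + 1) w m) : ∃ z, TorZigzag dE e₀ u dK εK z m := by
  induction i generalizing d with
  | zero =>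
      obtain rfl : d = c := by omega
      exact TorZigzag.exists_of_zigzag hkill haug hE hK hK0 h
  | succ i ih =>
      -- `dE w` is a `dK`-cycle, hence a `dK`-boundary, which moves the zigzag one step back
      have hboundary : (dE (i + 1)).rTensor (K d) w ∈ range ((dK d).lTensor (E (i + 1))) := by
        cases d with
        | zero =>
            obtain rfl : c = i + 1 := by omega
            refine (Module.Flat.lTensor_exact (E (i + 1)) hK0 _).mp ?_
            rw [← rTensor_lTensor_comm_apply,
              rTensor_eq_zero_of_range_le_smul_top hkill _ hsmall, LinearMap.zero_apply]
        | succ d =>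
            obtain ⟨w', hw', -⟩ := h
            refine (Module.Flat.lTensor_exact (E (i + 1)) (hK d) _).mp ?_
            rw [← rTensor_lTensor_comm_apply, hw', (hE (i + 1)).rTensor_apply_rTensor_apply]
      obtain ⟨w', hw'⟩ := hboundary
      exact ih (d := d + 1) (by omega) (w := w') ⟨w, hw', h⟩

lemma TorZigzag.exists_cycle [∀ i, Module.Free S (E i)]
    (hsmall : range (dE c) ≤ I • ⊤) (hkill : ∀ x ∈ I, ∀ m : M, x • m = 0)
    (haug : range (e₀.toLinearMap ∘ₗ dE 0) = I) (hE : ∀ i, Function.Exact (dE (i + 1)) (dE i))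
    (hK : ∀ i, Function.Exact (dK (i + 1)) (dK i)) (hK0 : Function.Exact (dK 0) εK) (x : K 0) :
    ∃ z, TorZigzag dE e₀ u dK εK z (εK x) := by
  have hx : Zigzag dE u dK εK 0 (c + 1) ((lidOf u (K 0)).symm x) (εK x) := by
    simp only [Zigzag]
    rw [cornerEval_top, LinearEquiv.apply_symm_apply]
  exact hx.exists_torZigzag hsmall hkill haug hE hK hK0 (by omega)

lemma Zigzag.map (hkill : ∀ x ∈ I, ∀ m : M, x • m = 0) (φ : ∀ d, E d →ₗ[S] K d)
    (hφ : ∀ d, dK d ∘ₗ φ (d + 1) = φ d ∘ₗ dE d) {m₀ : M} (hφ0 : ∀ y, εK (φ 0 y) = e₀ y • m₀)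
    {θ : S} {d i : ℕ} {g : E i ⊗[S] E d}
    (h : Zigzag dE u dE (I.mkQ ∘ₗ e₀.toLinearMap) d i g (I.mkQ θ)) :
    Zigzag dE u dK εK d i ((φ d).lTensor (E i) g) (θ • m₀) := by
  induction d generalizing i with
  | zero =>
      simp only [Zigzag] at h ⊢
      by_cases hi : i = c + 1
      · subst hi
        rw [cornerEval_top] at h ⊢
        rw [lidOf_lTensor, hφ0]
        exact smul_eq_smul_of_sub_mem hkill ((Submodule.Quotient.eq I).mp h) m₀
      · rw [cornerEval_of_ne hi] at h
        rw [cornerEval_of_ne hi, LinearMap.zero_apply,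
          hkill θ ((Submodule.Quotient.mk_eq_zero I).mp h.symm)]
  | succ d ih =>
      obtain ⟨g', hg', hg'm⟩ := h
      refine ⟨(φ d).lTensor (E (i + 1)) g', ?_, ih hg'm⟩
      rw [← lTensor_comp_apply, hφ, lTensor_comp_apply, hg', rTensor_lTensor_comm_apply]

lemma TorZigzag.map (hkill : ∀ x ∈ I, ∀ m : M, x • m = 0) (φ : ∀ d, E d →ₗ[S] K d)
    (hφ : ∀ d, dK d ∘ₗ φ (d + 1) = φ d ∘ₗ dE d) {m₀ : M} (hφ0 : ∀ y, εK (φ 0 y) = e₀ y • m₀)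
    {θ : S} {z : E (c + 1)}
    (h : TorZigzag dE e₀ u dE (I.mkQ ∘ₗ e₀.toLinearMap) z (I.mkQ θ)) :
    TorZigzag dE e₀ u dK εK (φ (c + 1) z) (θ • m₀) := by
  obtain ⟨s, hs, hsm⟩ := h
  refine ⟨(φ c).lTensor (E 1) s, ?_, hsm.map hkill φ hφ hφ0⟩
  rw [rTensor_lTensor_comm_apply, lidOf_lTensor, hs]
  exact (LinearMap.congr_fun (hφ c) z).symm

lemma exact_mkQ_comp (haug : range (e₀.toLinearMap ∘ₗ dE 0) = I) :
    Function.Exact (dE 0) (I.mkQ ∘ₗ e₀.toLinearMap) := fun x => by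
  rw [comp_apply, Submodule.mkQ_apply, Submodule.Quotient.mk_eq_zero, ← haug]
  simp [e₀.injective.eq_iff]

lemma exists_torZigzag_generator [∀ i, Module.Free S (E i)] (hsmall : range (dE c) ≤ I • ⊤)
    (haug : range (e₀.toLinearMap ∘ₗ dE 0) = I) (hlast : dE (c + 1) = 0)
    (hE : ∀ i, Function.Exact (dE (i + 1)) (dE i)) :
    ∃ θ r : S, TorZigzag dE e₀ u dE (I.mkQ ∘ₗ e₀.toLinearMap) (u.symm 1) (I.mkQ θ) ∧
      r * θ - 1 ∈ I := by
  have hE0 := exact_mkQ_comp haug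
  obtain ⟨v, hv⟩ := TorZigzag.exists_of_cycle (u := u) (εK := I.mkQ ∘ₗ e₀.toLinearMap) haug hE hE
    (hsmall (mem_range_self _ (u.symm 1)))
  obtain ⟨θ, rfl⟩ := Submodule.mkQ_surjective I v
  obtain ⟨z, hz⟩ :=
    TorZigzag.exists_cycle (u := u) hsmall quotient_smul_eq_zero_of_mem haug hE hE hE0
      (e₀.symm 1)
  have hz_eq : u z • u.symm 1 = z := by
    rw [← map_smul, smul_eq_mul, mul_one, LinearEquiv.symm_apply_apply]
  have hvz := hv.smul (u z)
  rw [hz_eq] at hvz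
  -- `z` and `u z • u.symm 1` are the same cycle, so their values agree
  have hunit := (hz.sub hvz).eq_zero haug hlast hE hE hE0 (by rw [sub_self]; exact zero_mem _)
  rw [comp_apply, LinearEquiv.coe_coe, LinearEquiv.apply_symm_apply, ← map_smul, ← map_sub,
    smul_eq_mul, Submodule.mkQ_apply, Submodule.Quotient.mk_eq_zero] at hunit
  exact ⟨θ, u z, hv, by simpa using I.neg_mem hunit⟩

lemma exists_sub_mem_range_quotMap [∀ i, Module.Free S (E i)] [∀ i, Module.Free S (K i)]
    (hkill : ∀ x ∈ I, ∀ m : M, x • m = 0) (hεK : Function.Surjective εK)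
    (haug : range (e₀.toLinearMap ∘ₗ dE 0) = I) (hE : ∀ i, Function.Exact (dE (i + 1)) (dE i))
    (hK : ∀ i, Function.Exact (dK (i + 1)) (dK i)) (hK0 : Function.Exact (dK 0) εK)
    {s : K 0 →ₗ[S] K (c + 1)} {θ r : S} (hr : r * θ - 1 ∈ I)
    (hs : ∀ x, TorZigzag dE e₀ u dK εK (s x) (θ • εK x))
    (z : K (c + 1) ⧸ I • (⊤ : Submodule S (K (c + 1)))) (hz : quotMap I (dK c) z = 0) :
    ∃ x, z - quotMap I s x ∈ range (quotMap I (dK (c + 1))) := by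
  obtain ⟨z, rfl⟩ := Submodule.Quotient.mk_surjective _ z
  rw [quotMap_mk, Submodule.Quotient.mk_eq_zero] at hz
  obtain ⟨m, hm⟩ := TorZigzag.exists_of_cycle (u := u) (εK := εK) haug hE hK hz
  obtain ⟨x, hx⟩ := hεK (r • m)
  have hθx : θ • εK x = m := by
    rw [hx, smul_smul, mul_comm, smul_eq_smul_of_sub_mem hkill hr, one_smul]
  have hsub := hm.sub (hθx ▸ hs x)
  rw [sub_self] at hsub
  refine ⟨Submodule.Quotient.mk x, ?_⟩
  rw [quotMap_mk, ← Submodule.Quotient.mk_sub, mk_mem_range_quotMap_iff]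
  exact hsub.mem_sup_of_zero haug hE hK hK0

lemma mem_range_quotMap_of_mem_range [∀ i, Module.Free S (K i)]
    (hkill : ∀ x ∈ I, ∀ m : M, x • m = 0) (haug : range (e₀.toLinearMap ∘ₗ dE 0) = I)
    (hlast : dE (c + 1) = 0) (hE : ∀ i, Function.Exact (dE (i + 1)) (dE i))
    (hK : ∀ i, Function.Exact (dK (i + 1)) (dK i)) (hK0 : Function.Exact (dK 0) εK)
    {s : K 0 →ₗ[S] K (c + 1)} {θ r : S} (hr : r * θ - 1 ∈ I)
    (hs : ∀ x, TorZigzag dE e₀ u dK εK (s x) (θ • εK x))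
    (x : K 0 ⧸ I • (⊤ : Submodule S (K 0)))
    (hx : quotMap I s x ∈ range (quotMap I (dK (c + 1)))) : x ∈ range (quotMap I (dK 0)) := by
  obtain ⟨x, rfl⟩ := Submodule.Quotient.mk_surjective _ x
  rw [quotMap_mk, mk_mem_range_quotMap_iff] at hx
  have hθx : θ • εK x = 0 := (hs x).eq_zero haug hlast hE hK hK0 hx
  have hεx : εK x = 0 := by
    rw [← one_smul S (εK x), ← smul_eq_smul_of_sub_mem hkill hr, mul_smul, hθx, smul_zero]
  obtain ⟨y, rfl⟩ := (hK0 x).mp hεx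
  exact ⟨Submodule.Quotient.mk y, rfl⟩

variable {σ : ∀ i j : ℕ, (E i ⊗[S] K j) →ₗ[S] K (i + j)}

lemma torZigzag_sigma (hkill : ∀ x ∈ I, ∀ m : M, x • m = 0)
    (hσaug : ∀ (y : E 0) (x : K 0), εK (σ 0 0 (y ⊗ₜ x)) = (e₀ y) • (εK x))
    (hσchain0 : ∀ i,
      (dK i) ∘ₗ (σ (i + 1) 0) = (σ i 0) ∘ₗ (TensorProduct.map (dE i) LinearMap.id))
    {θ : S} {y : E (c + 1)}
    (hθ : TorZigzag dE e₀ u dE (I.mkQ ∘ₗ e₀.toLinearMap) y (I.mkQ θ)) (x : K 0) :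
    TorZigzag dE e₀ u dK εK (σ (c + 1) 0 (y ⊗ₜ x)) (θ • εK x) :=
  hθ.map hkill (fun d => σ d 0 ∘ₗ (TensorProduct.mk S (E d) (K 0)).flip x)
    (fun d => LinearMap.ext fun q => LinearMap.congr_fun (hσchain0 d) (q ⊗ₜ x))
    (fun y => hσaug y x)

lemma quotMap_dK_comp_quotMap_sig (hσchain : ∀ i j,
      (dK ((i + 1) + j)) ∘ₗ (σ (i + 1) (j + 1))
        = (castK (Nat.add_right_comm i j 1) : K (i + (j + 1)) →ₗ[S] K ((i + 1) + j)) ∘ₗ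
            ((σ i (j + 1)) ∘ₗ (TensorProduct.map (dE i) LinearMap.id))
          + ((-1 : ℤ) ^ (i + 1)) •
            ((σ (i + 1) j) ∘ₗ (TensorProduct.map LinearMap.id (dK j))))
    {y : E (c + 1)} (hy : dE c y ∈ I • (⊤ : Submodule S (E c)))
    {sig : ∀ j : ℕ, K j →ₗ[S] K (c + 1 + j)} (hsig : ∀ j x, sig j x = σ (c + 1) j (y ⊗ₜ x))
    (j : ℕ) :
    (quotMap I (dK (c + 1 + j))) ∘ₗ (quotMap I (sig (j + 1)))
      = ((-1 : ℤ) ^ (c + 1)) • ((quotMap I (sig j)) ∘ₗ (quotMap I (dK j))) := by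
  refine Submodule.linearMap_qext _ (LinearMap.ext fun k => ?_)
  have hchain := LinearMap.congr_fun (hσchain c j) (y ⊗ₜ k)
  simp only [LinearMap.comp_apply, LinearMap.add_apply, LinearMap.smul_apply, map_tmul,
    LinearMap.id_apply, ← hsig] at hchain
  have hsmall : dE c y ⊗ₜ[S] k ∈ I • (⊤ : Submodule S (E c ⊗[S] K (j + 1))) :=
    Submodule.smul_top_le_comap_smul_top I ((TensorProduct.mk S _ _).flip k) hy
  simp only [LinearMap.comp_apply, LinearMap.smul_apply, Submodule.mkQ_apply, quotMap_mk,
    hchain, Submodule.Quotient.mk_add, Submodule.Quotient.mk_smul]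
  rw [add_eq_right, Submodule.Quotient.mk_eq_zero]
  exact Submodule.smul_top_le_comap_smul_top I _
    (Submodule.smul_top_le_comap_smul_top I _ hsmall)

lemma quotMap_dK_comp_quotMap_sig_zero
    (hσchain0 : ∀ i,
      (dK i) ∘ₗ (σ (i + 1) 0) = (σ i 0) ∘ₗ (TensorProduct.map (dE i) LinearMap.id))
    {y : E (c + 1)} (hy : dE c y ∈ I • (⊤ : Submodule S (E c)))
    {sig : ∀ j : ℕ, K j →ₗ[S] K (c + 1 + j)} (hsig : ∀ j x, sig j x = σ (c + 1) j (y ⊗ₜ x)) :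
    (quotMap I (dK c)) ∘ₗ (quotMap I (sig 0)) = 0 := by
  refine Submodule.linearMap_qext _ (LinearMap.ext fun k => ?_)
  have hchain := LinearMap.congr_fun (hσchain0 c) (y ⊗ₜ k)
  simp only [LinearMap.comp_apply, map_tmul, LinearMap.id_apply, ← hsig] at hchain
  simp only [LinearMap.comp_apply, Submodule.mkQ_apply, quotMap_mk, LinearMap.zero_apply,
    hchain, Submodule.Quotient.mk_eq_zero]
  exact Submodule.smul_top_le_comap_smul_top I _
    (Submodule.smul_top_le_comap_smul_top I ((TensorProduct.mk S _ _).flip k) hy)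

end DoubleComplex

open TensorProduct in
theorem sigma_top_induces_iso_H0_to_Hc
    (S : Type*) [CommRing S] (I : Ideal S) (c : ℕ)
    -- the resolution `E` of `R = S/I`, of length `c+1`, with `∂_{c+1} ≅ ∂₁^*`
    (E : ℕ → Type*) [∀ i, AddCommGroup (E i)] [∀ i, Module S (E i)]
    [∀ i, Module.Free S (E i)] [∀ i, Module.Finite S (E i)]
    (dE : ∀ i : ℕ, E (i + 1) →ₗ[S] E i)
    (hvanish : ∀ i, Subsingleton (E (c + 2 + i)))
    (e₀ : E 0 ≃ₗ[S] S)
    (haug : LinearMap.range (e₀.toLinearMap ∘ₗ dE 0) = I)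
    (hEexact : ∀ i, LinearMap.ker (dE i) = LinearMap.range (dE (i + 1)))
    (a : E (c + 1) ≃ₗ[S] Module.Dual S (E 0))
    (b : E c ≃ₗ[S] Module.Dual S (E 1))
    (hdual : ∀ z : E (c + 1), b (dE c z) = (dE 0).dualMap (a z))
    (u : E (c + 1) ≃ₗ[S] S)
    -- the `R`-module `M` and its `S`-free resolution `K`
    (M : Type*) [AddCommGroup M] [Module S M]
    (hkill : ∀ x ∈ I, ∀ m : M, x • m = 0)
    (K : ℕ → Type*) [∀ i, AddCommGroup (K i)] [∀ i, Module S (K i)]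
    [∀ i, Module.Free S (K i)]
    (dK : ∀ i : ℕ, K (i + 1) →ₗ[S] K i)
    (εK : K 0 →ₗ[S] M) (hεK : Function.Surjective εK)
    (hK0 : LinearMap.ker εK = LinearMap.range (dK 0))
    (hKexact : ∀ i, LinearMap.ker (dK i) = LinearMap.range (dK (i + 1)))
    -- `σ : E ⊗ K → K`, a map of complexes inducing the multiplication `R ⊗ M → M`
    (σ : ∀ i j : ℕ, (E i ⊗[S] K j) →ₗ[S] K (i + j))
    (hσaug : ∀ (y : E 0) (x : K 0), εK (σ 0 0 (y ⊗ₜ x)) = (e₀ y) • (εK x))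
    (hσchain : ∀ i j,
      (dK ((i + 1) + j)) ∘ₗ (σ (i + 1) (j + 1))
        = (castK (by omega) : K (i + (j + 1)) →ₗ[S] K ((i + 1) + j)) ∘ₗ
            ((σ i (j + 1)) ∘ₗ (TensorProduct.map (dE i) LinearMap.id))
          + ((-1 : ℤ) ^ (i + 1)) •
            ((σ (i + 1) j) ∘ₗ (TensorProduct.map LinearMap.id (dK j))))
    (hσchain0 : ∀ i,
      (dK i) ∘ₗ (σ (i + 1) 0) = (σ i 0) ∘ₗ (TensorProduct.map (dE i) LinearMap.id))
    -- the maps `σ_{c+1, j}`, via the identification `u : E_{c+1} ≅ S`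
    (sig : ∀ j : ℕ, K j →ₗ[S] K (c + 1 + j))
    (hsig : ∀ (j : ℕ) (x : K j), sig j x = σ (c + 1) j ((u.symm 1) ⊗ₜ x)) :
    -- `R ⊗ σ_{c+1,•}` is a morphism of complexes `R ⊗ K → (R ⊗ K)[−(c+1)]` ...
    (∀ j : ℕ,
      (quotMap I (dK (c + 1 + j))) ∘ₗ (quotMap I (sig (j + 1)))
        = ((-1 : ℤ) ^ (c + 1)) • ((quotMap I (sig j)) ∘ₗ (quotMap I (dK j)))) ∧
    -- ... inducing an isomorphism `M = H₀(R ⊗ K) ≅ H_{c+1}(R ⊗ K) = Tor^S_{c+1}(R,M)`: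
    ((quotMap I (dK c)) ∘ₗ (quotMap I (sig 0)) = 0) ∧
    (∀ x, (quotMap I (sig 0)) ((quotMap I (dK 0)) x)
      ∈ LinearMap.range (quotMap I (dK (c + 1)))) ∧
    (∀ z, (quotMap I (dK c)) z = 0 →
      ∃ x, z - (quotMap I (sig 0)) x ∈ LinearMap.range (quotMap I (dK (c + 1)))) ∧
    (∀ x, (quotMap I (sig 0)) x ∈ LinearMap.range (quotMap I (dK (c + 1))) →
      x ∈ LinearMap.range (quotMap I (dK 0))) := by
  have hE (i : ℕ) : Function.Exact (dE (i + 1)) (dE i) := LinearMap.exact_iff.mpr (hEexact i)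
  have hK (i : ℕ) : Function.Exact (dK (i + 1)) (dK i) := LinearMap.exact_iff.mpr (hKexact i)
  have hεK0 : Function.Exact (dK 0) εK := LinearMap.exact_iff.mpr hK0
  have hlast : dE (c + 1) = 0 := by
    have := hvanish 0
    exact LinearMap.ext fun x => by rw [Subsingleton.elim x 0, map_zero, LinearMap.zero_apply]
  have hsmall : range (dE c) ≤ I • ⊤ := by
    rintro _ ⟨z, rfl⟩
    exact mem_smul_top_of_eq_dualMap e₀ (dE 0) haug.le a b (dE c) hdual z
  obtain ⟨θ, r, hθ, hr⟩ := exists_torZigzag_generator (u := u) hsmall haug hlast hE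
  have hs (x : K 0) : TorZigzag dE e₀ u dK εK (sig 0 x) (θ • εK x) := by
    rw [hsig]
    exact torZigzag_sigma hkill hσaug hσchain0 hθ x
  have hy := hsmall (mem_range_self _ (u.symm 1))
  have hchain := quotMap_dK_comp_quotMap_sig hσchain hy hsig
  exact ⟨hchain, quotMap_dK_comp_quotMap_sig_zero hσchain0 hy hsig,
    mem_range_of_comp_eq_neg_one_pow_smul (hchain 0),
    exists_sub_mem_range_quotMap hkill hεK haug hE hK hεK0 hr hs,
    mem_range_quotMap_of_mem_range hkill haug hlast hE hK hεK0 hr hs⟩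
end

section
/- Let S be a local Gorenstein ring, g a non-zerodivisor, R = S/(g), and M an R-module with finite S-free resolution (K, δ). Let τ: K → K[1] be a homotopy for multiplication by g on K. Then the reductions modulo g of the even part K_even = ⊕ K_{2i} and the odd part K_odd = ⊕ K_{2i+1}, together with the maps induced by δ + τ, form a matrix factorization of g up to stabilization: (δ + τ)^2 = g·id on K, so the pair of maps (δ+τ: K_odd → K_even, δ+τ: K_even → K_odd) satisfies that both compositions equal multiplication by g. -/
open scoped DirectSum

section Folding

/- Applied with `E j = K (2 * j)`, `O j = K (2 * j + 1)`, `dE j = d (2 * j)`, `dO j = d (2 * j + 1)`,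
`tE j = τ (2 * j)`, `tO j = τ (2 * j + 1)`: in this indexing `2 * (j + 1) = 2 * j + 1 + 1` is only
used definitionally, so no transport `castK` appears. -/
variable {S : Type*} [CommRing S] {E O : ℕ → Type*}
  [∀ j, AddCommGroup (E j)] [∀ j, Module S (E j)] [∀ j, AddCommGroup (O j)] [∀ j, Module S (O j)]
  (dE : ∀ j, O j →ₗ[S] E j) (dO : ∀ j, E (j + 1) →ₗ[S] O j)
  (tE : ∀ j, E j →ₗ[S] O j) (tO : ∀ j, O j →ₗ[S] E (j + 1))

def foldOddToEven : (⨁ j, O j) →ₗ[S] ⨁ j, E j :=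
  DirectSum.toModule S ℕ _ fun j =>
    DirectSum.lof S ℕ E (j + 1) ∘ₗ tO j + DirectSum.lof S ℕ E j ∘ₗ dE j

def foldEvenToOdd : (⨁ j, E j) →ₗ[S] ⨁ j, O j :=
  DirectSum.toModule S ℕ _ fun j =>
    Nat.casesOn (motive := fun j => E j →ₗ[S] ⨁ j, O j) j (DirectSum.lof S ℕ O 0 ∘ₗ tE 0)
      fun j => DirectSum.lof S ℕ O (j + 1) ∘ₗ tE (j + 1) + DirectSum.lof S ℕ O j ∘ₗ dO j

@[simp]
theorem foldOddToEven_lof (j : ℕ) (x : O j) :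
    foldOddToEven dE tO (DirectSum.lof S ℕ O j x) =
      DirectSum.lof S ℕ E (j + 1) (tO j x) + DirectSum.lof S ℕ E j (dE j x) :=
  DirectSum.toModule_lof _ _ _

@[simp]
theorem foldEvenToOdd_lof_zero (x : E 0) :
    foldEvenToOdd dO tE (DirectSum.lof S ℕ E 0 x) = DirectSum.lof S ℕ O 0 (tE 0 x) :=
  DirectSum.toModule_lof _ _ _

@[simp]
theorem foldEvenToOdd_lof_succ (j : ℕ) (x : E (j + 1)) :
    foldEvenToOdd dO tE (DirectSum.lof S ℕ E (j + 1) x) =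
      DirectSum.lof S ℕ O (j + 1) (tE (j + 1) x) + DirectSum.lof S ℕ O j (dO j x) :=
  DirectSum.toModule_lof _ _ _

variable {dE dO tE tO} {g : S}

theorem foldOddToEven_comp_foldEvenToOdd (hdd : ∀ j, dE j ∘ₗ dO j = 0)
    (htt : ∀ j, tO j ∘ₗ tE j = 0) (h₀ : dE 0 ∘ₗ tE 0 = g • LinearMap.id)
    (hhomotopy : ∀ j, dE (j + 1) ∘ₗ tE (j + 1) + tO j ∘ₗ dO j = g • LinearMap.id) :
    foldOddToEven dE tO ∘ₗ foldEvenToOdd dO tE = g • LinearMap.id := by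
  have hdd' j x : dE j (dO j x) = 0 := LinearMap.congr_fun (hdd j) x
  have htt' j x : tO j (tE j x) = 0 := LinearMap.congr_fun (htt j) x
  have h₀' x : dE 0 (tE 0 x) = g • x := LinearMap.congr_fun h₀ x
  have hhomotopy' j x : dE (j + 1) (tE (j + 1) x) + tO j (dO j x) = g • x :=
    LinearMap.congr_fun (hhomotopy j) x
  ext (_ | j) x : 2
  · simp [htt', h₀']
  · simp only [LinearMap.comp_apply, foldEvenToOdd_lof_succ, map_add, foldOddToEven_lof, htt',
      hdd', map_zero, zero_add, add_zero]
    rw [← map_add, hhomotopy', map_smul]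
    rfl

theorem foldEvenToOdd_comp_foldOddToEven (hdd : ∀ j, dO j ∘ₗ dE (j + 1) = 0)
    (htt : ∀ j, tE (j + 1) ∘ₗ tO j = 0)
    (hhomotopy : ∀ j, dO j ∘ₗ tO j + tE j ∘ₗ dE j = g • LinearMap.id) :
    foldEvenToOdd dO tE ∘ₗ foldOddToEven dE tO = g • LinearMap.id := by
  have hdd' j x : dO j (dE (j + 1) x) = 0 := LinearMap.congr_fun (hdd j) x
  have htt' j x : tE (j + 1) (tO j x) = 0 := LinearMap.congr_fun (htt j) x
  have hhomotopy' j x : dO j (tO j x) + tE j (dE j x) = g • x := LinearMap.congr_fun (hhomotopy j) x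
  ext (_ | j) x : 2 <;>
  · simp only [LinearMap.comp_apply, foldOddToEven_lof, map_add, foldEvenToOdd_lof_zero,
      foldEvenToOdd_lof_succ, htt', hdd', map_zero, zero_add, add_zero]
    rw [← map_add, hhomotopy', map_smul]
    rfl

end Folding

open scoped DirectSum in
theorem even_odd_folding_is_matrix_factorization
    (S : Type*) [CommRing S] (g : S)
    (K : ℕ → Type*) [∀ i, AddCommGroup (K i)] [∀ i, Module S (K i)]
    (d : ∀ i : ℕ, K (i + 1) →ₗ[S] K i)
    (hd : ∀ i, (d i) ∘ₗ (d (i + 1)) = 0)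
    -- the homotopy `τ` for multiplication by `g`, with `τ² = 0`
    (τ : ∀ i : ℕ, K i →ₗ[S] K (i + 1))
    (hτ : ∀ i, (d (i + 1)) ∘ₗ (τ (i + 1)) + (τ i) ∘ₗ (d i) = g • LinearMap.id)
    (hτ0 : (d 0) ∘ₗ (τ 0) = g • LinearMap.id)
    (hτsq : ∀ i, (τ (i + 1)) ∘ₗ (τ i) = 0)
    -- the folded maps `d + τ`
    (A : (⨁ i : ℕ, K (2 * i + 1)) →ₗ[S] ⨁ i : ℕ, K (2 * i))
    (B : (⨁ i : ℕ, K (2 * i)) →ₗ[S] ⨁ i : ℕ, K (2 * i + 1))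
    (hA : A = DirectSum.toModule S ℕ _ (fun i =>
      (DirectSum.lof S ℕ (fun t => K (2 * t)) (i + 1)) ∘ₗ
          (castK (by ring) : K (2 * i + 1 + 1) →ₗ[S] K (2 * (i + 1))) ∘ₗ (τ (2 * i + 1))
        + (DirectSum.lof S ℕ (fun t => K (2 * t)) i) ∘ₗ (d (2 * i))))
    (hB : B = DirectSum.toModule S ℕ _
      ((fun i => match i with
        | 0 => (DirectSum.lof S ℕ (fun t => K (2 * t + 1)) 0) ∘ₗ (τ 0)
        | (i + 1) =>
          (DirectSum.lof S ℕ (fun t => K (2 * t + 1)) (i + 1)) ∘ₗ (τ (2 * (i + 1)))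
            + (DirectSum.lof S ℕ (fun t => K (2 * t + 1)) i) ∘ₗ (d (2 * i + 1)) ∘ₗ
                (castK (by ring) : K (2 * (i + 1)) →ₗ[S] K (2 * i + 1 + 1))) :
        ∀ i : ℕ, K (2 * i) →ₗ[S] ⨁ t : ℕ, K (2 * t + 1))) :
    A ∘ₗ B = g • LinearMap.id ∧ B ∘ₗ A = g • LinearMap.id := by
  have hA' : A = foldOddToEven (E := fun j => K (2 * j)) (fun j => d (2 * j))
      (fun j => τ (2 * j + 1)) := hA
  have hB' : B = foldEvenToOdd (E := fun j => K (2 * j)) (O := fun j => K (2 * j + 1))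
      (fun j => d (2 * j + 1)) (fun j => τ (2 * j)) := by
    rw [hB]
    ext (_ | j) x : 2 <;> rfl
  rw [hA', hB']
  exact ⟨foldOddToEven_comp_foldEvenToOdd (fun j => hd (2 * j)) (fun j => hτsq (2 * j)) hτ0
      (fun j => hτ (2 * j + 1)),
    foldEvenToOdd_comp_foldOddToEven (fun j => hd (2 * j + 1)) (fun j => hτsq (2 * j + 1))
      (fun j => hτ (2 * j))⟩
end
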